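/- Let u, S, T, h be smooth fields on ℝ × ℝ³ and set ω = ∇×u. If the momentum equation holds in the Crocco form ∂u/∂t − u×ω = T∇S − ∇(h + |u|²/2), then the fluid helicity density u·ω satisfies the balance law ∂(u·ω)/∂t + ∇·[ (u·ω) u + (h − |u|²/2) ω ] = T ω·∇S + u·(∇T × ∇S). -/

import Mathlib

noncomputable section

/-- Vectors in ℝ³. -/
abbrev Vec3 : Type := Fin 3 → ℝ

/-- Points of space-time: `(t, x)` with `t : ℝ`, `x : Fin 3 → ℝ`. -/
abbrev Pt : Type := ℝ × Vec3

/-- Euclidean dot product on ℝ³. -/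
def dot3 (a b : Vec3) : ℝ := ∑ i, a i * b i

/-- Cross product on ℝ³. -/
def cross3 (a b : Vec3) : Vec3 :=
  ![a 1 * b 2 - a 2 * b 1, a 2 * b 0 - a 0 * b 2, a 0 * b 1 - a 1 * b 0]

/-- Spatial partial derivative ∂f/∂xᵢ of a scalar field. -/
def pd (i : Fin 3) (f : Pt → ℝ) (p : Pt) : ℝ :=
  fderiv ℝ (fun x => f (p.1, x)) p.2 (Pi.single i 1)

/-- Time derivative ∂f/∂t of a scalar field. -/
def dt (f : Pt → ℝ) (p : Pt) : ℝ := deriv (fun s => f (s, p.2)) p.1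

/-- Time derivative of a vector field, componentwise. -/
def dtVec (F : Pt → Vec3) (p : Pt) : Vec3 := fun i => dt (fun q => F q i) p

/-- Spatial gradient ∇f of a scalar field. -/
def grad3 (f : Pt → ℝ) (p : Pt) : Vec3 := fun i => pd i f p

/-- Spatial divergence ∇·F of a vector field. -/
def div3 (F : Pt → Vec3) (p : Pt) : ℝ := ∑ i, pd i (fun q => F q i) p

/-- Spatial curl ∇×F of a vector field. -/
def curl3 (F : Pt → Vec3) (p : Pt) : Vec3 :=
  ![pd 1 (fun q => F q 2) p - pd 2 (fun q => F q 1) p,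
    pd 2 (fun q => F q 0) p - pd 0 (fun q => F q 2) p,
    pd 0 (fun q => F q 1) p - pd 1 (fun q => F q 0) p]

/-- Directional derivative (u·∇)f of a scalar field. -/
def dirD (u : Pt → Vec3) (f : Pt → ℝ) (p : Pt) : ℝ := ∑ i, u p i * pd i f p

/-- Directional derivative (u·∇)F of a vector field. -/
def dirDVec (u F : Pt → Vec3) (p : Pt) : Vec3 :=
  fun j => ∑ i, u p i * pd i (fun q => F q j) p

/-- (∇u)ᵀ·A, the vector with i-th component ∑ⱼ (∂uʲ/∂xⁱ) Aⱼ. -/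
def gradTdot (u A : Pt → Vec3) (p : Pt) : Vec3 :=
  fun i => ∑ j, pd i (fun q => u q j) p * A p j

/-- A field is smooth when it is C^∞ jointly in time and space. -/
def SmoothS (f : Pt → ℝ) : Prop := ContDiff ℝ (⊤ : ℕ∞) f

/-- A vector field is smooth when it is C^∞ jointly in time and space. -/
def SmoothV (F : Pt → Vec3) : Prop := ContDiff ℝ (⊤ : ℕ∞) F

/-
Write `a = ∂u/∂t` and `H = u·ω`. Since `∂ω/∂t = ∇×a`, the identity `∇·(u×a) = a·ω − u·(∇×a)`
gives `∂H/∂t = 2 a·ω − ∇·(u×a)`. By the vector triple product, the Crocco equation turns the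
helicity flux minus `u×a` into `B ω − T u×∇S + u×∇B` with `B = h + |u|²/2`, whose divergence
is `2 ω·∇B − ∇T·(u×∇S) − T ω·∇S` because `∇·(∇×) = 0` and `∇×∇ = 0`. The `∇B` terms cancel
against `2 a·ω = 2 T ω·∇S − 2 ω·∇B`, and `−∇T·(u×∇S) = u·(∇T×∇S)`.
-/

open scoped Matrix

section SecondDerivative

variable {E F : Type*} [NormedAddCommGroup E] [NormedSpace ℝ E]
  [NormedAddCommGroup F] [NormedSpace ℝ F] {f : E → F}

theorem differentiable_fderiv_apply (hf : ContDiff ℝ 2 f) (w : E) :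
    Differentiable ℝ (fun y => fderiv ℝ f y w) :=
  ((hf.fderiv_right le_rfl).differentiable one_ne_zero).clm_apply (differentiable_const w)

theorem fderiv_fderiv_apply_comm (hf : ContDiff ℝ 2 f) (x v w : E) :
    fderiv ℝ (fun y => fderiv ℝ f y w) x v = fderiv ℝ (fun y => fderiv ℝ f y v) x w := by
  have hdf : Differentiable ℝ (fderiv ℝ f) :=
    (hf.fderiv_right le_rfl).differentiable one_ne_zero
  rw [fderiv_clm_apply (hdf x) (differentiableAt_const w),
    fderiv_clm_apply (hdf x) (differentiableAt_const v)]
  simpa using hf.contDiffAt.isSymmSndFDerivAt (by simp) v w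

end SecondDerivative

section PartialDerivatives

variable {f g : Pt → ℝ} {p : Pt}

theorem pd_eq_fderiv (hf : DifferentiableAt ℝ f p) (i : Fin 3) :
    pd i f p = fderiv ℝ f p (0, Pi.single i 1) := by
  have hslice : HasFDerivAt (fun x : Vec3 => (p.1, x)) (ContinuousLinearMap.inr ℝ ℝ Vec3) p.2 :=
    hasFDerivAt_prodMk_right p.1 p.2
  have hcomp : HasFDerivAt (fun x => f (p.1, x))
      (fderiv ℝ f p ∘L ContinuousLinearMap.inr ℝ ℝ Vec3) p.2 :=
    hf.hasFDerivAt.comp p.2 hslice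
  rw [pd, hcomp.fderiv]
  rfl

theorem dt_eq_fderiv (hf : DifferentiableAt ℝ f p) : dt f p = fderiv ℝ f p (1, 0) := by
  have hslice : HasDerivAt (fun s : ℝ => (s, p.2)) ((1 : ℝ), (0 : Vec3)) p.1 :=
    (hasDerivAt_id p.1).prodMk (hasDerivAt_const p.1 p.2)
  exact (hf.hasFDerivAt.comp_hasDerivAt p.1 hslice).deriv

theorem pd_add (hf : DifferentiableAt ℝ f p) (hg : DifferentiableAt ℝ g p) (i : Fin 3) :
    pd i (fun q => f q + g q) p = pd i f p + pd i g p := by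
  rw [pd_eq_fderiv (hf.fun_add hg), pd_eq_fderiv hf, pd_eq_fderiv hg, fderiv_fun_add hf hg]
  rfl

theorem pd_sub (hf : DifferentiableAt ℝ f p) (hg : DifferentiableAt ℝ g p) (i : Fin 3) :
    pd i (fun q => f q - g q) p = pd i f p - pd i g p := by
  rw [pd_eq_fderiv (hf.fun_sub hg), pd_eq_fderiv hf, pd_eq_fderiv hg, fderiv_fun_sub hf hg]
  rfl

theorem pd_mul (hf : DifferentiableAt ℝ f p) (hg : DifferentiableAt ℝ g p) (i : Fin 3) :
    pd i (fun q => f q * g q) p = pd i f p * g p + f p * pd i g p := by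
  rw [pd_eq_fderiv (hf.fun_mul hg), pd_eq_fderiv hf, pd_eq_fderiv hg, fderiv_fun_mul hf hg]
  simp only [add_apply, smul_apply, smul_eq_mul]
  ring

theorem dt_add (hf : DifferentiableAt ℝ f p) (hg : DifferentiableAt ℝ g p) :
    dt (fun q => f q + g q) p = dt f p + dt g p := by
  rw [dt_eq_fderiv (hf.fun_add hg), dt_eq_fderiv hf, dt_eq_fderiv hg, fderiv_fun_add hf hg]
  rfl

theorem dt_sub (hf : DifferentiableAt ℝ f p) (hg : DifferentiableAt ℝ g p) :
    dt (fun q => f q - g q) p = dt f p - dt g p := by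
  rw [dt_eq_fderiv (hf.fun_sub hg), dt_eq_fderiv hf, dt_eq_fderiv hg, fderiv_fun_sub hf hg]
  rfl

theorem dt_mul (hf : DifferentiableAt ℝ f p) (hg : DifferentiableAt ℝ g p) :
    dt (fun q => f q * g q) p = dt f p * g p + f p * dt g p := by
  rw [dt_eq_fderiv (hf.fun_mul hg), dt_eq_fderiv hf, dt_eq_fderiv hg, fderiv_fun_mul hf hg]
  simp only [add_apply, smul_apply, smul_eq_mul]
  ring

end PartialDerivatives

section FirstOrder

variable {A B : Pt → Vec3} {f : Pt → ℝ} {p : Pt}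

theorem div3_add (hA : DifferentiableAt ℝ A p) (hB : DifferentiableAt ℝ B p) :
    div3 (fun q => A q + B q) p = div3 A p + div3 B p := by
  simp only [div3, Pi.add_apply, ← Finset.sum_add_distrib]
  exact Finset.sum_congr rfl fun i _ => pd_add (by fun_prop) (by fun_prop) i

theorem div3_sub (hA : DifferentiableAt ℝ A p) (hB : DifferentiableAt ℝ B p) :
    div3 (fun q => A q - B q) p = div3 A p - div3 B p := by
  simp only [div3, Pi.sub_apply, ← Finset.sum_sub_distrib]
  exact Finset.sum_congr rfl fun i _ => pd_sub (by fun_prop) (by fun_prop) i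

theorem div3_smul (hf : DifferentiableAt ℝ f p) (hA : DifferentiableAt ℝ A p) :
    div3 (fun q => f q • A q) p = dot3 (grad3 f p) (A p) + f p * div3 A p := by
  simp only [div3, dot3, grad3, Pi.smul_apply, smul_eq_mul, Fin.sum_univ_three]
  simp (disch := fun_prop) only [pd_mul]
  ring

theorem div3_cross3 (hA : DifferentiableAt ℝ A p) (hB : DifferentiableAt ℝ B p) :
    div3 (fun q => cross3 (A q) (B q)) p = dot3 (B p) (curl3 A p) - dot3 (A p) (curl3 B p) := by
  simp only [div3, dot3, cross3, curl3, Fin.sum_univ_three, Matrix.cons_val_zero,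
    Matrix.cons_val_one, Matrix.cons_val_two, Matrix.head_cons, Matrix.tail_cons]
  simp (disch := fun_prop) only [pd_sub, pd_mul]
  ring

theorem dt_dot3 (hA : DifferentiableAt ℝ A p) (hB : DifferentiableAt ℝ B p) :
    dt (fun q => dot3 (A q) (B q)) p = dot3 (dtVec A p) (B p) + dot3 (A p) (dtVec B p) := by
  simp only [dot3, dtVec, Fin.sum_univ_three]
  simp (disch := fun_prop) only [dt_add, dt_mul]
  ring

end FirstOrder

section Regularity

variable {n m : WithTop ℕ∞} {f : Pt → ℝ} {A B : Pt → Vec3}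

theorem ContDiff.pd (hf : ContDiff ℝ n f) (hmn : m + 1 ≤ n) (i : Fin 3) :
    ContDiff ℝ m (fun p => pd i f p) := by
  have hd : Differentiable ℝ f :=
    hf.differentiable (zero_lt_one.trans_le (le_add_self.trans hmn)).ne'
  simp only [pd_eq_fderiv (hd _)]
  exact (hf.fderiv_right hmn).clm_apply contDiff_const

theorem ContDiff.dt (hf : ContDiff ℝ n f) (hmn : m + 1 ≤ n) : ContDiff ℝ m (fun p => dt f p) := by
  have hd : Differentiable ℝ f :=
    hf.differentiable (zero_lt_one.trans_le (le_add_self.trans hmn)).ne'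
  simp only [dt_eq_fderiv (hd _)]
  exact (hf.fderiv_right hmn).clm_apply contDiff_const

theorem ContDiff.grad3 (hf : ContDiff ℝ n f) (hmn : m + 1 ≤ n) : ContDiff ℝ m (grad3 f) :=
  contDiff_pi.2 fun i => hf.pd hmn i

theorem ContDiff.dtVec (hA : ContDiff ℝ n A) (hmn : m + 1 ≤ n) : ContDiff ℝ m (dtVec A) :=
  contDiff_pi.2 fun i => (contDiff_pi.1 hA i).dt hmn

theorem ContDiff.curl3 (hA : ContDiff ℝ n A) (hmn : m + 1 ≤ n) : ContDiff ℝ m (curl3 A) := by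
  have hpd (i j : Fin 3) : ContDiff ℝ m (fun p => _root_.pd i (fun q => A q j) p) :=
    (contDiff_pi.1 hA j).pd hmn i
  refine contDiff_pi.2 fun i => ?_
  fin_cases i <;> exact (hpd _ _).sub (hpd _ _)

@[fun_prop]
theorem ContDiff.dot3 (hA : ContDiff ℝ n A) (hB : ContDiff ℝ n B) :
    ContDiff ℝ n (fun p => dot3 (A p) (B p)) := by
  unfold _root_.dot3
  fun_prop

@[fun_prop]
theorem ContDiff.cross3 (hA : ContDiff ℝ n A) (hB : ContDiff ℝ n B) :
    ContDiff ℝ n (fun p => cross3 (A p) (B p)) := by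
  refine contDiff_pi.2 fun i => ?_
  fin_cases i <;> simp [_root_.cross3] <;> fun_prop

end Regularity

section SecondOrder

variable {f : Pt → ℝ} {A : Pt → Vec3}

theorem pd_pd_comm (hf : ContDiff ℝ 2 f) (i j : Fin 3) (p : Pt) :
    pd i (fun q => pd j f q) p = pd j (fun q => pd i f q) p := by
  have hd : Differentiable ℝ f := hf.differentiable two_ne_zero
  simp only [pd_eq_fderiv (hd _)]
  rw [pd_eq_fderiv (differentiable_fderiv_apply hf _ p),
    pd_eq_fderiv (differentiable_fderiv_apply hf _ p), fderiv_fderiv_apply_comm hf]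

theorem dt_pd_comm (hf : ContDiff ℝ 2 f) (i : Fin 3) (p : Pt) :
    dt (fun q => pd i f q) p = pd i (fun q => dt f q) p := by
  have hd : Differentiable ℝ f := hf.differentiable two_ne_zero
  simp only [pd_eq_fderiv (hd _), dt_eq_fderiv (hd _)]
  rw [pd_eq_fderiv (differentiable_fderiv_apply hf _ p),
    dt_eq_fderiv (differentiable_fderiv_apply hf _ p), fderiv_fderiv_apply_comm hf]

theorem differentiable_pd_apply (hA : ContDiff ℝ 2 A) (i j : Fin 3) :
    Differentiable ℝ (fun p => pd i (fun q => A q j) p) :=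
  ((contDiff_pi.1 hA j).pd (m := 1) (by norm_num) i).differentiable one_ne_zero

theorem curl3_grad3 (hf : ContDiff ℝ 2 f) : curl3 (grad3 f) = 0 := by
  ext p i
  fin_cases i <;> simp [curl3, grad3, pd_pd_comm hf]

theorem div3_curl3 (hA : ContDiff ℝ 2 A) : div3 (curl3 A) = 0 := by
  ext p
  have hAi (i : Fin 3) : ContDiff ℝ 2 (fun q => A q i) := contDiff_pi.1 hA i
  simp only [div3, curl3, Fin.sum_univ_three, Matrix.cons_val_zero,
    Matrix.cons_val_one, Matrix.cons_val_two, Matrix.head_cons, Matrix.tail_cons]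
  simp (disch := exact (differentiable_pd_apply hA _ _).differentiableAt) only [pd_sub]
  rw [pd_pd_comm (hAi 0) 1 2, pd_pd_comm (hAi 1) 2 0, pd_pd_comm (hAi 2) 0 1, Pi.zero_apply]
  ring

theorem dtVec_curl3 (hA : ContDiff ℝ 2 A) : dtVec (curl3 A) = curl3 (dtVec A) := by
  ext p i
  have hAi (i : Fin 3) : ContDiff ℝ 2 (fun q => A q i) := contDiff_pi.1 hA i
  fin_cases i <;>
    simp (disch := exact (differentiable_pd_apply hA _ _).differentiableAt) [dtVec, curl3,
      dt_sub, dt_pd_comm (hAi _)]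

end SecondOrder

section Helicity

variable {A : Pt → Vec3} {f : Pt → ℝ} {p : Pt}

theorem cross3_eq_crossProduct (a b : Vec3) : cross3 a b = a ⨯₃ b := rfl

theorem dot3_eq_dotProduct (a b : Vec3) : dot3 a b = a ⬝ᵥ b := rfl

theorem div3_smul_curl3 (hf : DifferentiableAt ℝ f p) (hA : ContDiff ℝ 2 A) :
    div3 (fun q => f q • curl3 A q) p = dot3 (grad3 f p) (curl3 A p) := by
  rw [div3_smul hf ((hA.curl3 (m := 1) (by norm_num)).differentiable one_ne_zero p),
    div3_curl3 hA, Pi.zero_apply, mul_zero, add_zero]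

theorem div3_cross3_grad3 (hA : DifferentiableAt ℝ A p) (hf : ContDiff ℝ 2 f) :
    div3 (fun q => cross3 (A q) (grad3 f q)) p = dot3 (grad3 f p) (curl3 A p) := by
  rw [div3_cross3 hA ((hf.grad3 (m := 1) (by norm_num)).differentiable one_ne_zero p),
    curl3_grad3 hf, Pi.zero_apply, sub_eq_self]
  exact dotProduct_zero (A p)

theorem dt_dot3_curl3 (hA : ContDiff ℝ 2 A) (p : Pt) :
    dt (fun q => dot3 (A q) (curl3 A q)) p
      = 2 * dot3 (dtVec A p) (curl3 A p) - div3 (fun q => cross3 (A q) (dtVec A q)) p := by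
  have hd : Differentiable ℝ A := hA.differentiable two_ne_zero
  rw [dt_dot3 (hd p) ((hA.curl3 (m := 1) (by norm_num)).differentiable one_ne_zero p),
    dtVec_curl3 hA,
    div3_cross3 (hd p) ((hA.dtVec (m := 1) (by norm_num)).differentiable one_ne_zero p)]
  ring

theorem helicity_flux_eq_cross3_add (u ω g k : Vec3) (T h : ℝ) :
    dot3 u ω • u + (h - dot3 u u / 2) • ω
      = cross3 u (cross3 u ω + (T • g - k))
        + ((h + dot3 u u / 2) • ω - T • cross3 u g + cross3 u k) := by
  simp only [cross3_eq_crossProduct, dot3_eq_dotProduct, map_add, map_sub, map_smul,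
    cross_cross_eq_smul_sub_smul']
  module

end Helicity

/-- Crocco-form momentum equation implies the fluid helicity
    balance law with source T ω·∇S + u·(∇T × ∇S). -/
theorem helicity_balance_of_crocco
    (u : Pt → Vec3) (S T h : Pt → ℝ)
    (hu : SmoothV u) (hS : SmoothS S) (hT : SmoothS T) (hh : SmoothS h)
    (hmom : ∀ p : Pt,
      dtVec u p - cross3 (u p) (curl3 u p)
        = T p • grad3 S p
          - grad3 (fun q => h q + dot3 (u q) (u q) / 2) p) :
    ∀ p : Pt,
      dt (fun q => dot3 (u q) (curl3 u q)) p
        + div3 (fun q =>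
            dot3 (u q) (curl3 u q) • u q
              + (h q - dot3 (u q) (u q) / 2) • curl3 u q) p
        = T p * dot3 (curl3 u p) (grad3 S p)
          + dot3 (u p) (cross3 (grad3 T p) (grad3 S p)) := by
  intro p
  unfold SmoothV SmoothS at *
  have h2 : (2 : WithTop ℕ∞) ≤ (⊤ : ℕ∞) := WithTop.coe_le_coe.mpr le_top
  rw [dt_dot3_curl3 (hu.of_le h2)]
  set ω := curl3 u
  set B : Pt → ℝ := fun q => h q + dot3 (u q) (u q) / 2
  set a := dtVec u
  have hdiff {F : Type} [NormedAddCommGroup F] [NormedSpace ℝ F] {f : Pt → F}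
      (hf : ContDiff ℝ (⊤ : ℕ∞) f) : DifferentiableAt ℝ f p := hf.differentiable (by simp) p
  have hω : ContDiff ℝ (⊤ : ℕ∞) ω := hu.curl3 (by simp)
  have hB : ContDiff ℝ (⊤ : ℕ∞) B := by fun_prop
  have hgS : ContDiff ℝ (⊤ : ℕ∞) (grad3 S) := hS.grad3 (by simp)
  have hgB : ContDiff ℝ (⊤ : ℕ∞) (grad3 B) := hB.grad3 (by simp)
  have ha : ContDiff ℝ (⊤ : ℕ∞) a := hu.dtVec (by simp)
  have hut : a = fun q => cross3 (u q) (ω q) + (T q • grad3 S q - grad3 B q) :=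
    funext fun q => sub_eq_iff_eq_add'.1 (hmom q)
  have hflux : (fun q => dot3 (u q) (ω q) • u q + (h q - dot3 (u q) (u q) / 2) • ω q)
      = fun q => cross3 (u q) (a q)
          + (B q • ω q - T q • cross3 (u q) (grad3 S q) + cross3 (u q) (grad3 B q)) := by
    rw [hut]
    exact funext fun q => helicity_flux_eq_cross3_add _ _ _ _ _ _
  rw [hflux, div3_add (hdiff (by fun_prop)) (hdiff (by fun_prop)),
    div3_add (hdiff (by fun_prop)) (hdiff (by fun_prop)),
    div3_sub (hdiff (by fun_prop)) (hdiff (by fun_prop)),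
    div3_smul_curl3 (hdiff hB) (hu.of_le h2), div3_smul (hdiff hT) (hdiff (by fun_prop)),
    div3_cross3_grad3 (hdiff hu) (hS.of_le h2), div3_cross3_grad3 (hdiff hu) (hB.of_le h2),
    congrFun hut p]
  simp only [dot3, cross3, Fin.sum_univ_three, Pi.add_apply, Pi.sub_apply, Pi.smul_apply,
    smul_eq_mul, Matrix.cons_val_zero, Matrix.cons_val_one, Matrix.cons_val_two,
    Matrix.head_cons, Matrix.tail_cons]
  ring
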